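/- Suppose b_{ik} > 0 for all i, k and ω_k > 0, a_k > 0 for all k. Let (p, e) belong to the feasible set F of problem (P1), and let μ be dual-feasible, i.e. μ_i ≥ 0 for all i, μ_i > 0 for at least one i, and β_{ij} μ_j ≤ μ_i for all i ≠ j. Then the weighted sum-rate is bounded by the dual value: R(p) ≤ ∑_k (ω_k log₂(1 + a_k p_k(μ)) − (∑_i b_{ik} μ_i) p_k(μ)) + ∑_i μ_i E_i, where p_k(μ) = max(ω_k/(ln 2 · ∑_i b_{ik} μ_i) − 1/a_k, 0). (Weak duality for problem (P1).) -/

import Mathlib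

open Finset

/-- The weighted sum-rate `R(p) = ∑_k ω_k log₂(1 + a_k p_k)`. -/
noncomputable def sumRate {K : ℕ} (ω a : Fin K → ℝ) (p : Fin K → ℝ) : ℝ :=
  ∑ k, ω k * Real.logb 2 (1 + a k * p k)

/-- Feasibility for problem (P1). -/
def FeasibleP1 {N K : ℕ} (b : Fin N → Fin K → ℝ) (E : Fin N → ℝ)
    (β : Fin N → Fin N → ℝ) (p : Fin K → ℝ) (e : Fin N → Fin N → ℝ) : Prop :=
  (∀ k, 0 ≤ p k) ∧ (∀ i j : Fin N, i ≠ j → 0 ≤ e i j) ∧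
    ∀ i, ∑ k, b i k * p k ≤
      E i + (∑ j, if j = i then 0 else β j i * e j i)
          - (∑ j, if j = i then 0 else e i j)

/-- The water-filling power allocation
`p_k(μ) = max (ω_k/(ln 2 · ∑_i b_{ik} μ_i) − 1/a_k) 0`. -/
noncomputable def waterfillPower {N K : ℕ} (a : Fin K → ℝ) (b : Fin N → Fin K → ℝ)
    (ω : Fin K → ℝ) (μ : Fin N → ℝ) (k : Fin K) : ℝ :=
  max (ω k / (Real.log 2 * ∑ i, b i k * μ i) - 1 / a k) 0

/-! The Lagrangian of (P1) with multipliers `μ` separates over the users: each user contributes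
the concave term `ω_k log₂(1 + a_k x) - c_k x` with `c_k = ∑_i b_{ik} μ_i`, which the water-filling
level maximises over `x ≥ 0` (tangent-line bound for `log` at that level), and the μ-weighted
sum of the energy constraints bounds `∑_k c_k p_k` by `∑_i μ_i E_i`, because dual feasibility
`β_{ij} μ_j ≤ μ_i` makes every energy transfer lose μ-value. -/

theorem Real.log_sub_log_le_div {x y : ℝ} (hx : 0 < x) (hy : 0 < y) :
    Real.log x - Real.log y ≤ (x - y) / y := by
  have h := Real.log_le_sub_one_of_pos (div_pos hx hy)
  rw [Real.log_div hx.ne' hy.ne', div_sub_one hy.ne'] at h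
  exact h

section Waterfilling

variable {ω a c p : ℝ}

theorem waterfill_slope_mul_le (hω : 0 < ω) (ha : 0 < a) (hc : 0 < c) (hp : 0 ≤ p) :
    ω * a * (p - max (ω / (Real.log 2 * c) - 1 / a) 0)
        / (1 + a * max (ω / (Real.log 2 * c) - 1 / a) 0)
      ≤ Real.log 2 * c * (p - max (ω / (Real.log 2 * c) - 1 / a) 0) := by
  have hlog2 : 0 < Real.log 2 := Real.log_pos one_lt_two
  rcases le_or_gt (ω / (Real.log 2 * c) - 1 / a) 0 with hlevel | hlevel
  · rw [max_eq_right hlevel, mul_zero, add_zero, div_one, sub_zero]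
    have : ω * a ≤ Real.log 2 * c := by
      rw [sub_nonpos, div_le_div_iff₀ (by positivity) ha] at hlevel
      linarith
    exact mul_le_mul_of_nonneg_right this hp
  · rw [max_eq_left hlevel.le]
    have hlevel_eq : 1 + a * (ω / (Real.log 2 * c) - 1 / a) = a * ω / (Real.log 2 * c) := by
      field_simp
      ring
    rw [hlevel_eq]
    field_simp
    rfl

theorem lagrangian_le_waterfill (hω : 0 < ω) (ha : 0 < a) (hc : 0 < c) (hp : 0 ≤ p) :
    ω * Real.logb 2 (1 + a * p) - c * p ≤
      ω * Real.logb 2 (1 + a * max (ω / (Real.log 2 * c) - 1 / a) 0)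
        - c * max (ω / (Real.log 2 * c) - 1 / a) 0 := by
  set q := max (ω / (Real.log 2 * c) - 1 / a) 0
  have hq : 0 ≤ q := le_max_right _ _
  have hlog2 : 0 < Real.log 2 := Real.log_pos one_lt_two
  have hpq : 0 < 1 + a * q := by positivity
  have tangent : ω * (Real.log (1 + a * p) - Real.log (1 + a * q))
      ≤ ω * a * (p - q) / (1 + a * q) := by
    calc ω * (Real.log (1 + a * p) - Real.log (1 + a * q))
        ≤ ω * ((1 + a * p - (1 + a * q)) / (1 + a * q)) :=
          mul_le_mul_of_nonneg_left (Real.log_sub_log_le_div (by positivity) hpq) hω.le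
      _ = ω * a * (p - q) / (1 + a * q) := by ring
  have key : ω * (Real.log (1 + a * p) - Real.log (1 + a * q)) / Real.log 2 ≤ c * (p - q) := by
    rw [div_le_iff₀ hlog2]
    linarith [waterfill_slope_mul_le hω ha hc hp]
  simp only [Real.logb]
  linarith [show ω * (Real.log (1 + a * p) / Real.log 2) - ω * (Real.log (1 + a * q) / Real.log 2)
    = ω * (Real.log (1 + a * p) - Real.log (1 + a * q)) / Real.log 2 by ring]

end Waterfilling

section EnergyBudget

variable {N K : ℕ} {b : Fin N → Fin K → ℝ} {E : Fin N → ℝ} {β : Fin N → Fin N → ℝ}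
  {p : Fin K → ℝ} {e : Fin N → Fin N → ℝ} {μ : Fin N → ℝ}

theorem weighted_received_le_weighted_sent (he : ∀ i j : Fin N, i ≠ j → 0 ≤ e i j)
    (hμ_feas : ∀ i j : Fin N, i ≠ j → β i j * μ j ≤ μ i) :
    ∑ i, μ i * (∑ j, if j = i then 0 else β j i * e j i)
      ≤ ∑ i, μ i * (∑ j, if j = i then 0 else e i j) := by
  simp only [Finset.mul_sum, mul_ite, mul_zero]
  rw [Finset.sum_comm]
  refine Finset.sum_le_sum fun i _ => Finset.sum_le_sum fun j _ => ?_
  by_cases hij : i = j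
  · simp [hij]
  · rw [if_neg hij, if_neg (Ne.symm hij)]
    calc μ j * (β i j * e i j) = (β i j * μ j) * e i j := by ring
      _ ≤ μ i * e i j := mul_le_mul_of_nonneg_right (hμ_feas i j hij) (he i j hij)

theorem weighted_power_le_weighted_energy (hfeas : FeasibleP1 b E β p e)
    (hμ_nonneg : ∀ i, 0 ≤ μ i) (hμ_feas : ∀ i j : Fin N, i ≠ j → β i j * μ j ≤ μ i) :
    ∑ k, (∑ i, b i k * μ i) * p k ≤ ∑ i, μ i * E i := by
  obtain ⟨-, he, hcons⟩ := hfeas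
  have transfer := weighted_received_le_weighted_sent (μ := μ) he hμ_feas
  calc ∑ k, (∑ i, b i k * μ i) * p k = ∑ i, μ i * ∑ k, b i k * p k := by
        simp only [Finset.sum_mul, Finset.mul_sum]
        rw [Finset.sum_comm]
        exact Finset.sum_congr rfl fun i _ => Finset.sum_congr rfl fun k _ => by ring
    _ ≤ ∑ i, μ i * (E i + (∑ j, if j = i then 0 else β j i * e j i)
          - (∑ j, if j = i then 0 else e i j)) :=
        Finset.sum_le_sum fun i _ => mul_le_mul_of_nonneg_left (hcons i) (hμ_nonneg i)
    _ = ∑ i, μ i * E i + (∑ i, μ i * (∑ j, if j = i then 0 else β j i * e j i)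
          - ∑ i, μ i * (∑ j, if j = i then 0 else e i j)) := by
        simp only [mul_sub, mul_add, Finset.sum_sub_distrib, Finset.sum_add_distrib]
        ring
    _ ≤ ∑ i, μ i * E i := by linarith

end EnergyBudget

/-- Weak duality for problem (P1): any feasible weighted sum-rate is bounded
above by the dual value at any dual-feasible `μ`. -/
theorem weak_duality {N K : ℕ}
    (a : Fin K → ℝ) (b : Fin N → Fin K → ℝ) (ω : Fin K → ℝ)
    (E : Fin N → ℝ) (β : Fin N → Fin N → ℝ)
    (hb : ∀ i k, 0 < b i k) (hω : ∀ k, 0 < ω k) (ha : ∀ k, 0 < a k)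
    (p : Fin K → ℝ) (e : Fin N → Fin N → ℝ)
    (hfeas : FeasibleP1 b E β p e)
    (μ : Fin N → ℝ)
    (hμ_nonneg : ∀ i, 0 ≤ μ i) (hμ_pos : ∃ i, 0 < μ i)
    (hμ_feas : ∀ i j : Fin N, i ≠ j → β i j * μ j ≤ μ i) :
    sumRate ω a p ≤
      (∑ k, (ω k * Real.logb 2 (1 + a k * waterfillPower a b ω μ k)
        - (∑ i, b i k * μ i) * waterfillPower a b ω μ k))
      + ∑ i, μ i * E i := by
  obtain ⟨i₀, hi₀⟩ := hμ_pos
  have hprice_pos (k : Fin K) : 0 < ∑ i, b i k * μ i :=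
    Finset.sum_pos' (fun i _ => mul_nonneg (hb i k).le (hμ_nonneg i))
      ⟨i₀, Finset.mem_univ _, mul_pos (hb i₀ k) hi₀⟩
  have hsplit : sumRate ω a p =
      ∑ k, (ω k * Real.logb 2 (1 + a k * p k) - (∑ i, b i k * μ i) * p k)
        + ∑ k, (∑ i, b i k * μ i) * p k := by
    rw [sumRate, ← Finset.sum_add_distrib]
    simp only [sub_add_cancel]
  rw [hsplit]
  gcongr ?_ + ?_
  · exact Finset.sum_le_sum fun k _ =>
      lagrangian_le_waterfill (hω k) (ha k) (hprice_pos k) (hfeas.1 k)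
  · exact weighted_power_le_weighted_energy hfeas hμ_nonneg hμ_feas
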